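/- Let $n \ge 2$, $d \ge 2$, $i \ge 1$ be integers with $m = \lfloor n/2 \rfloor$. Suppose for each $l = 1, \dots, i$ the value $y_l$ satisfies $\sum_{j=1}^{l} d^{-m-l}\binom{m+l}{m+j} y_j = d^{-(n-m-l)} - d^{-(m+l)}$. Then $y_i = \sum_{j=1}^{i} (-1)^{i+j} d^{m+j} \binom{m+i}{m+j} \left( d^{-(n-m-j)} - d^{-(m+j)} \right)$. -/

import Mathlib

/-!
After multiplying the `l`-th equation by `d ^ (m + l)`, the system is lower triangular with
matrix `C(m + l, m + j)`. Its inverse is `(-1) ^ (l + j) * C(m + l, m + j)`, because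
`∑ j, (-1) ^ (i + j) * C(m + i, m + j) * C(m + j, m + k) = δ i k`, an alternating row sum of
binomial coefficients in disguise.
-/

open Finset

theorem sum_Icc_neg_one_pow_mul_choose_mul_choose (m : ℕ) {k i : ℕ} (hki : k ≤ i) :
    ∑ j ∈ Icc k i, (-1 : ℤ) ^ (i + j) * ((m + i).choose (m + j) * (m + j).choose (m + k))
      = if k = i then 1 else 0 := by
  obtain ⟨r, rfl⟩ := Nat.exists_eq_add_of_le hki
  -- `Nat.choose_mul` factors out `C(m+k+r, m+k)`, leaving the alternating row sum of `C(r, ·)`.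
  have hterm : ∀ t ∈ range (r + 1),
      (-1 : ℤ) ^ (k + r + (k + t))
          * ((m + (k + r)).choose (m + (k + t)) * (m + (k + t)).choose (m + k))
        = (-1) ^ r * (m + (k + r)).choose (m + k) * ((-1) ^ t * r.choose t) := by
    intro t _
    have hchoose := Nat.choose_mul (n := m + (k + r)) (k := m + (k + t)) (s := m + k) (by omega)
    rw [show m + (k + r) - (m + k) = r by omega, show m + (k + t) - (m + k) = t by omega]
      at hchoose
    rw [show k + r + (k + t) = 2 * k + (r + t) by ring, pow_add, pow_mul, neg_one_sq, one_pow,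
      pow_add]
    rw [← Nat.cast_mul, hchoose]
    push_cast
    ring
  rw [← Ico_add_one_right_eq_Icc, sum_Ico_eq_sum_range, show k + r + 1 - k = r + 1 by omega,
    sum_congr rfl hterm, ← mul_sum, Int.alternating_sum_range_choose]
  rcases r.eq_zero_or_pos with rfl | hr
  · simp
  · simp [hr.ne']

theorem eq_sum_neg_one_pow_mul_choose_of_sum_choose_mul_eq {R : Type*} [CommRing R] (m : ℕ)
    {a i : ℕ} (hai : a ≤ i) {y c : ℕ → R}
    (h : ∀ l, a ≤ l → l ≤ i → ∑ j ∈ Icc a l, ((m + l).choose (m + j) : R) * y j = c l) :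
    y i = ∑ j ∈ Icc a i, (-1 : R) ^ (i + j) * ((m + i).choose (m + j)) * c j := by
  symm
  calc ∑ j ∈ Icc a i, (-1 : R) ^ (i + j) * ((m + i).choose (m + j)) * c j
      = ∑ j ∈ Icc a i, ∑ k ∈ Icc a j,
          (-1 : R) ^ (i + j) * ((m + i).choose (m + j)) * (((m + j).choose (m + k)) * y k) := by
        refine sum_congr rfl fun j hj => ?_
        rw [mem_Icc] at hj
        rw [← h j hj.1 hj.2, mul_sum]
    _ = ∑ k ∈ Icc a i, ∑ j ∈ Icc k i,
          (-1 : R) ^ (i + j) * ((m + i).choose (m + j)) * (((m + j).choose (m + k)) * y k) :=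
        sum_comm' fun j k => by simp only [mem_Icc]; omega
    _ = ∑ k ∈ Icc a i, (if k = i then 1 else 0) * y k := by
        refine sum_congr rfl fun k hk => ?_
        rw [mem_Icc] at hk
        have horth := congrArg (Int.cast : ℤ → R)
          (sum_Icc_neg_one_pow_mul_choose_mul_choose m hk.2)
        push_cast at horth
        rw [← horth, sum_mul]
        exact sum_congr rfl fun j _ => by ring
    _ = y i := by simp [hai]

theorem eigenvalue_closed_form_general (n d i : ℕ) (hd : 2 ≤ d) (hi : 1 ≤ i)
    (m : ℕ) (y : ℕ → ℝ)
    (hsys : ∀ l, 1 ≤ l → l ≤ i →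
      ∑ j ∈ Finset.Icc 1 l,
        (d : ℝ) ^ (-((m : ℤ) + l)) * ((m + l).choose (m + j)) * y j
      = (d : ℝ) ^ (-((n : ℤ) - m - l)) - (d : ℝ) ^ (-((m : ℤ) + l))) :
    y i = ∑ j ∈ Finset.Icc 1 i,
      (-1 : ℝ) ^ (i + j) * (d : ℝ) ^ ((m : ℤ) + j) * ((m + i).choose (m + j))
        * ((d : ℝ) ^ (-((n : ℤ) - m - j)) - (d : ℝ) ^ (-((m : ℤ) + j))) := by
  have hd0 : (d : ℝ) ≠ 0 := by exact_mod_cast (by omega : d ≠ 0)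
  refine (eq_sum_neg_one_pow_mul_choose_of_sum_choose_mul_eq m hi (y := y)
    (c := fun l => (d : ℝ) ^ ((m : ℤ) + l)
      * ((d : ℝ) ^ (-((n : ℤ) - m - l)) - (d : ℝ) ^ (-((m : ℤ) + l))))
    fun l hl1 hl2 => ?_).trans (sum_congr rfl fun j _ => by ring)
  rw [← hsys l hl1 hl2, mul_sum]
  refine sum_congr rfl fun j _ => ?_
  rw [← mul_assoc, ← mul_assoc, ← zpow_add₀ hd0, add_neg_cancel, zpow_zero, one_mul]

theorem eigenvalue_closed_form (n d i : ℕ) (hn : 2 ≤ n) (hd : 2 ≤ d) (hi : 1 ≤ i)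
    (m : ℕ) (hm : m = n / 2) (y : ℕ → ℝ)
    (hsys : ∀ l, 1 ≤ l → l ≤ i →
      ∑ j ∈ Finset.Icc 1 l,
        (d : ℝ) ^ (-((m : ℤ) + l)) * ((m + l).choose (m + j)) * y j
      = (d : ℝ) ^ (-((n : ℤ) - m - l)) - (d : ℝ) ^ (-((m : ℤ) + l))) :
    y i = ∑ j ∈ Finset.Icc 1 i,
      (-1 : ℝ) ^ (i + j) * (d : ℝ) ^ ((m : ℤ) + j) * ((m + i).choose (m + j))
        * ((d : ℝ) ^ (-((n : ℤ) - m - j)) - (d : ℝ) ^ (-((m : ℤ) + j))) :=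
  eigenvalue_closed_form_general n d i hd hi m y hsys
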